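/- arXiv:1203.5168 — 8 statements merged into one kernel-verified Lean document; each statement's English description precedes it below -/
import Mathlib

section
/- Let (λ, μ, M, m) be an exact context with λ: R → S, μ: R → T. Then the pair (λ, μ) is exact (i.e. (S ⊗_R T, 1⊗1) is an exact complement) if and only if the S-T-bimodule map γ: S ⊗_R T → M defined by s ⊗ t ↦ s·m·t is an isomorphism. -/
open MulOpposite
open scoped TensorProduct

universe u

/-- The tensor product over `R` of a right `R`-module `A` (with right action `ract`)
and a left `R`-module `B` (with left action `lact`), realized as the quotient of
`A ⊗[ℤ] B` by the relations `(a·r) ⊗ b = a ⊗ (r·b)`. -/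
noncomputable abbrev tensorOver (R : Type u) [Ring R] {A B : Type u}
    [AddCommGroup A] [AddCommGroup B]
    (ract : A → R → A) (lact : R → B → B) : Type u :=
  (TensorProduct ℤ A B) ⧸
    AddSubgroup.closure {x : TensorProduct ℤ A B |
      ∃ (a : A) (r : R) (b : B), x = (ract a r) ⊗ₜ[ℤ] b - a ⊗ₜ[ℤ] (lact r b)}

/-- The class of the elementary tensor `a ⊗ b` in `tensorOver R ract lact`. -/
noncomputable def tensorOver.mk (R : Type u) [Ring R] {A B : Type u}
    [AddCommGroup A] [AddCommGroup B]
    (ract : A → R → A) (lact : R → B → B) (a : A) (b : B) : tensorOver R ract lact :=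
  QuotientAddGroup.mk (a ⊗ₜ[ℤ] b)

section
variable {R S T : Type u} [Ring R] [Ring S] [Ring T]

/-- `S ⊗_R T`, where `S` is a right `R`-module via `λ` and `T` a left `R`-module via `μ`. -/
noncomputable abbrev TensST (lam : R →+* S) (mu : R →+* T) : Type u :=
  tensorOver R (fun (s : S) (r : R) => s * lam r) (fun (r : R) (t : T) => mu r * t)

/-- The elementary tensor `s ⊗ t` in `S ⊗_R T`. -/
noncomputable def eST (lam : R →+* S) (mu : R →+* T) (s : S) (t : T) : TensST lam mu :=
  tensorOver.mk R _ _ s t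

/-- `(λ, μ, M, m)` is an exact context: the sequence
`0 → R → S ⊕ T → M → 0` with maps `r ↦ (λ r, μ r)` and `(s,t) ↦ s•m − m•t` is exact. -/
def IsExactContext {M : Type u} [AddCommGroup M] [Module S M] [Module Tᵐᵒᵖ M]
    (lam : R →+* S) (mu : R →+* T) (m : M) : Prop :=
  Function.Injective (fun r : R => (lam r, mu r)) ∧
  (∀ (s : S) (t : T), s • m = op t • m ↔ ∃ r : R, lam r = s ∧ mu r = t) ∧
  (∀ x : M, ∃ (s : S) (t : T), x = s • m - op t • m)

/-- `(λ, μ)` is an exact pair: `(λ, μ, S ⊗_R T, 1 ⊗ 1)` is an exact context. -/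
noncomputable def IsExactPair (lam : R →+* S) (mu : R →+* T) : Prop :=
  Function.Injective (fun r : R => (lam r, mu r)) ∧
  (∀ (s : S) (t : T), eST lam mu s 1 = eST lam mu 1 t ↔ ∃ r : R, lam r = s ∧ mu r = t) ∧
  (∀ x : TensST lam mu, ∃ (s : S) (t : T), x = eST lam mu s 1 - eST lam mu 1 t)

/-! The map `γ` carries `s ⊗ 1 - 1 ⊗ t` to `s • m - m • t`. If the pair is exact, every tensor
has that form, and one sent to `0` has `(s, t) = (λ r, μ r)`, so it is `λ r ⊗ 1 - 1 ⊗ μ r = 0`;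
surjectivity of `γ` is that of `S ⊕ T → M`. Conversely, an injective `γ` identifies the complex
`S ⊕ T → S ⊗_R T` with `S ⊕ T → M`, so exactness of the latter transfers to the former. -/

lemma tensorOver.mk_ract_eq_mk_lact (R : Type u) [Ring R] {A B : Type u}
    [AddCommGroup A] [AddCommGroup B] (ract : A → R → A) (lact : R → B → B)
    (a : A) (r : R) (b : B) :
    tensorOver.mk R ract lact (ract a r) b = tensorOver.mk R ract lact a (lact r b) :=
  (QuotientAddGroup.eq_iff_sub_mem).2 (AddSubgroup.subset_closure ⟨a, r, b, rfl⟩)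

lemma eST_lam_one_eq_eST_one_mu (lam : R →+* S) (mu : R →+* T) (r : R) :
    eST lam mu (lam r) 1 = eST lam mu 1 (mu r) := by
  have h := tensorOver.mk_ract_eq_mk_lact R
    (fun (s : S) (r : R) => s * lam r) (fun (r : R) (t : T) => mu r * t) 1 r 1
  simp only [one_mul, mul_one] at h
  exact h

section Comparison

variable {M : Type u} [AddCommGroup M] [Module S M] [Module Tᵐᵒᵖ M]
  {lam : R →+* S} {mu : R →+* T} {m : M} {γ : TensST lam mu →+ M}

lemma map_eST_sub_eST (hγ : ∀ (s : S) (t : T), γ (eST lam mu s t) = s • (op t • m))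
    (s : S) (t : T) : γ (eST lam mu s 1 - eST lam mu 1 t) = s • m - op t • m := by
  rw [map_sub, hγ, hγ, op_one, one_smul, one_smul]

lemma IsExactPair.injective_of_isExactContext (hpair : IsExactPair lam mu)
    (hEC : IsExactContext lam mu m)
    (hγ : ∀ (s : S) (t : T), γ (eST lam mu s t) = s • (op t • m)) :
    Function.Injective γ := by
  rw [injective_iff_map_eq_zero]
  intro x hx
  obtain ⟨s, t, rfl⟩ := hpair.2.2 x
  rw [map_eST_sub_eST hγ] at hx
  obtain ⟨r, rfl, rfl⟩ := (hEC.2.1 s t).1 (sub_eq_zero.1 hx)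
  rw [eST_lam_one_eq_eST_one_mu, sub_self]

lemma IsExactContext.surjective (hEC : IsExactContext lam mu m)
    (hγ : ∀ (s : S) (t : T), γ (eST lam mu s t) = s • (op t • m)) :
    Function.Surjective γ := by
  intro x
  obtain ⟨s, t, rfl⟩ := hEC.2.2 x
  exact ⟨_, map_eST_sub_eST hγ s t⟩

lemma IsExactContext.isExactPair_of_injective (hEC : IsExactContext lam mu m)
    (hγ : ∀ (s : S) (t : T), γ (eST lam mu s t) = s • (op t • m))
    (hinj : Function.Injective γ) : IsExactPair lam mu := by
  obtain ⟨hlm, hmid, hsurj⟩ := hEC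
  refine ⟨hlm, fun s t => ?_, fun x => ?_⟩
  · rw [← hmid, ← hinj.eq_iff, hγ, hγ, op_one, one_smul, one_smul]
  · obtain ⟨s, t, hx⟩ := hsurj (γ x)
    exact ⟨s, t, hinj (by rw [map_eST_sub_eST hγ, hx])⟩

end Comparison

theorem stmt1_general {M : Type u} [AddCommGroup M] [Module S M] [Module Tᵐᵒᵖ M]
    (lam : R →+* S) (mu : R →+* T) (m : M)
    (hEC : IsExactContext lam mu m)
    (γ : TensST lam mu →+ M)
    (hγ : ∀ (s : S) (t : T), γ (eST lam mu s t) = s • (op t • m)) :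
    IsExactPair lam mu ↔ Function.Bijective γ :=
  ⟨fun hpair => ⟨hpair.injective_of_isExactContext hEC hγ, hEC.surjective hγ⟩,
    fun hbij => hEC.isExactPair_of_injective hγ hbij.1⟩

/-- Given an exact context `(λ, μ, M, m)`, the pair `(λ, μ)` is exact
iff the `(S,T)`-bimodule map `γ : S ⊗_R T → M`, `s ⊗ t ↦ s·m·t`, is an isomorphism. -/
theorem stmt1 {M : Type u} [AddCommGroup M] [Module S M] [Module Tᵐᵒᵖ M]
    [SMulCommClass S Tᵐᵒᵖ M]
    (lam : R →+* S) (mu : R →+* T) (m : M)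
    (hEC : IsExactContext lam mu m)
    (γ : TensST lam mu →+ M)
    (hγ : ∀ (s : S) (t : T), γ (eST lam mu s t) = s • (op t • m)) :
    IsExactPair lam mu ↔ Function.Bijective γ :=
  stmt1_general lam mu m hEC γ hγ

end
end

section
/- Let (λ, μ, M, m) be an exact context. The canonical map γ: S ⊗_R T → M, s ⊗ t ↦ smt, is an isomorphism if and only if Coker(λ) ⊗_R Coker(μ) = 0. -/
/-!
Let `δ : S × T → S ⊗_R T`, `(s, t) ↦ s ⊗ 1 - 1 ⊗ t`. Then `γ ∘ δ` is the map `(s, t) ↦ sm - mt`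
of the exact context: it is onto, and its kernel `{(λ r, μ r)}` is already killed by `δ`.
Hence `γ` is always onto, and it is injective exactly when `δ` is onto. The cokernel of `δ` is
`Coker(λ) ⊗_R Coker(μ)`: the projection `S ⊗_R T → Coker(λ) ⊗_R Coker(μ)` kills the image of
`δ`, and `s ⊗ t ↦ [s ⊗ t]` descends to a map `Coker(λ) ⊗_R Coker(μ) → (S ⊗_R T) ⧸ im δ`,
because `λ r ⊗ t = 1 ⊗ μ r t` and `s ⊗ μ r = s λ r ⊗ 1` lie in the image of `δ`.
-/

open MulOpposite
open scoped TensorProduct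

universe u

section
variable {R S T : Type u} [Ring R] [Ring S] [Ring T]

theorem AddMonoidHom.injective_iff_surjective_of_surjective_comp {P X Y : Type*}
    [AddGroup P] [AddGroup X] [AddGroup Y] (f : P →+ X) (g : X →+ Y)
    (hgf : Function.Surjective (g.comp f)) (hker : (g.comp f).ker ≤ f.ker) :
    Function.Injective g ↔ Function.Surjective f := by
  constructor
  · intro hg x
    obtain ⟨p, hp⟩ := hgf (g x)
    exact ⟨p, hg hp⟩
  · intro hf
    rw [injective_iff_map_eq_zero]
    intro x hx
    obtain ⟨p, rfl⟩ := hf x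
    exact hker hx

def QuotientAddGroup.lift₂ {A B C : Type*} [AddCommGroup A] [AddCommGroup B] [AddCommGroup C]
    (H : AddSubgroup A) (K : AddSubgroup B) (φ : A →+ B →+ C)
    (hH : ∀ a ∈ H, φ a = 0) (hK : ∀ b ∈ K, ∀ a, φ a b = 0) : A ⧸ H →+ B ⧸ K →+ C :=
  QuotientAddGroup.lift H
    (QuotientAddGroup.lift K φ.flip fun b hb => by ext a; exact hK b hb a).flip fun a ha => by
      ext b
      exact DFunLike.congr_fun (hH a ha) b

namespace tensorOver

variable {A B : Type u} [AddCommGroup A] [AddCommGroup B] (ract : A → R → A) (lact : R → B → B)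

noncomputable def mk₂ : A →+ B →+ tensorOver R ract lact :=
  AddMonoidHom.mk'
    (fun a => AddMonoidHom.mk' (tensorOver.mk R ract lact a) fun b b' =>
      congrArg QuotientAddGroup.mk (TensorProduct.tmul_add a b b'))
    fun a a' => by
      ext b
      exact congrArg QuotientAddGroup.mk (TensorProduct.add_tmul a a' b)

@[simp]
theorem mk₂_apply (a : A) (b : B) : mk₂ ract lact a b = tensorOver.mk R ract lact a b :=
  rfl

@[simp]
theorem mk_zero_left (b : B) : tensorOver.mk R ract lact 0 b = 0 :=
  DFunLike.congr_fun (mk₂ ract lact).map_zero b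

@[simp]
theorem mk_zero_right (a : A) : tensorOver.mk R ract lact a 0 = 0 :=
  (mk₂ ract lact a).map_zero

theorem mk_rel (a : A) (r : R) (b : B) :
    tensorOver.mk R ract lact (ract a r) b = tensorOver.mk R ract lact a (lact r b) :=
  QuotientAddGroup.eq_iff_sub_mem.2 (AddSubgroup.subset_closure ⟨a, r, b, rfl⟩)

@[elab_as_elim]
theorem induction_on {motive : tensorOver R ract lact → Prop} (x : tensorOver R ract lact)
    (zero : motive 0) (mk : ∀ a b, motive (tensorOver.mk R ract lact a b))
    (add : ∀ x y, motive x → motive y → motive (x + y)) : motive x := by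
  obtain ⟨z, rfl⟩ := QuotientAddGroup.mk_surjective x
  induction z using TensorProduct.induction_on with
  | zero => exact zero
  | tmul a b => exact mk a b
  | add z z' hz hz' => exact add _ _ hz hz'

variable {ract lact}

def lift {C : Type*} [AddCommGroup C] (φ : A →+ B →+ C)
    (hφ : ∀ a r b, φ (ract a r) b = φ a (lact r b)) : tensorOver R ract lact →+ C :=
  QuotientAddGroup.lift _ (TensorProduct.liftAddHom φ fun n a b => by simp) <| by
    rw [AddSubgroup.closure_le]
    rintro _ ⟨a, r, b, rfl⟩
    simp [hφ]

end tensorOver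

variable (lam : R →+* S) (mu : R →+* T)

noncomputable def diffTensor : S × T →+ TensST lam mu :=
  ((tensorOver.mk₂ _ _).flip 1).comp (AddMonoidHom.fst S T)
    - (tensorOver.mk₂ _ _ 1).comp (AddMonoidHom.snd S T)

theorem diffTensor_apply (p : S × T) :
    diffTensor lam mu p = eST lam mu p.1 1 - eST lam mu 1 p.2 :=
  rfl

theorem eST_rel (s : S) (r : R) (t : T) : eST lam mu (s * lam r) t = eST lam mu s (mu r * t) :=
  tensorOver.mk_rel _ _ s r t

@[simp]
theorem eST_zero_left (t : T) : eST lam mu 0 t = 0 :=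
  tensorOver.mk_zero_left _ _ t

@[simp]
theorem eST_zero_right (s : S) : eST lam mu s 0 = 0 :=
  tensorOver.mk_zero_right _ _ s

theorem diffTensor_map_eq_zero (r : R) : diffTensor lam mu (lam r, mu r) = 0 := by
  simpa [diffTensor_apply, sub_eq_zero] using eST_rel lam mu 1 r 1

theorem eST_mem_range_diffTensor_of_mem_range_left {s : S} (hs : s ∈ lam.toAddMonoidHom.range)
    (t : T) : eST lam mu s t ∈ (diffTensor lam mu).range := by
  obtain ⟨r, rfl⟩ := hs
  have h : eST lam mu (lam r) t = -diffTensor lam mu (0, mu r * t) := by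
    simpa [diffTensor_apply] using eST_rel lam mu 1 r t
  exact h ▸ neg_mem ⟨_, rfl⟩

theorem eST_mem_range_diffTensor_of_mem_range_right (s : S) {t : T}
    (ht : t ∈ mu.toAddMonoidHom.range) : eST lam mu s t ∈ (diffTensor lam mu).range := by
  obtain ⟨r, rfl⟩ := ht
  have h : eST lam mu s (mu r) = diffTensor lam mu (s * lam r, 0) := by
    simpa [diffTensor_apply] using (eST_rel lam mu s r 1).symm
  exact h ▸ ⟨_, rfl⟩

section

variable {lam mu}
  {ract : (S ⧸ lam.toAddMonoidHom.range) → R → (S ⧸ lam.toAddMonoidHom.range)}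
  {lact : R → (T ⧸ mu.toAddMonoidHom.range) → (T ⧸ mu.toAddMonoidHom.range)}
  (hract : ∀ (s : S) (r : R),
      ract (QuotientAddGroup.mk s) r = QuotientAddGroup.mk (s * lam r))
  (hlact : ∀ (r : R) (t : T),
      lact r (QuotientAddGroup.mk t) = QuotientAddGroup.mk (mu r * t))

noncomputable def projCokerTensor : TensST lam mu →+ tensorOver R ract lact :=
  tensorOver.lift (((tensorOver.mk₂ ract lact).comp (QuotientAddGroup.mk' _)).compl₂
      (QuotientAddGroup.mk' _)) fun s r t => by
    simp only [AddMonoidHom.compl₂_apply, AddMonoidHom.comp_apply, QuotientAddGroup.mk'_apply,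
      tensorOver.mk₂_apply, ← hract, ← hlact]
    exact tensorOver.mk_rel _ _ _ r _

theorem projCokerTensor_eST (s : S) (t : T) :
    projCokerTensor hract hlact (eST lam mu s t) = tensorOver.mk R ract lact s t :=
  rfl

theorem projCokerTensor_surjective : Function.Surjective (projCokerTensor hract hlact) := by
  intro x
  induction x using tensorOver.induction_on with
  | zero => exact ⟨0, map_zero _⟩
  | mk a b =>
    obtain ⟨s, rfl⟩ := QuotientAddGroup.mk_surjective a
    obtain ⟨t, rfl⟩ := QuotientAddGroup.mk_surjective b
    exact ⟨eST lam mu s t, rfl⟩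
  | add x y hx hy =>
    obtain ⟨x, rfl⟩ := hx
    obtain ⟨y, rfl⟩ := hy
    exact ⟨x + y, map_add _ _ _⟩

theorem projCokerTensor_diffTensor (p : S × T) :
    projCokerTensor hract hlact (diffTensor lam mu p) = 0 := by
  have hS : (QuotientAddGroup.mk 1 : S ⧸ lam.toAddMonoidHom.range) = 0 :=
    (QuotientAddGroup.eq_zero_iff _).2 ⟨1, map_one lam⟩
  have hT : (QuotientAddGroup.mk 1 : T ⧸ mu.toAddMonoidHom.range) = 0 :=
    (QuotientAddGroup.eq_zero_iff _).2 ⟨1, map_one mu⟩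
  rw [diffTensor_apply, map_sub, projCokerTensor_eST, projCokerTensor_eST, hS, hT,
    tensorOver.mk_zero_left, tensorOver.mk_zero_right, sub_zero]

noncomputable def cokerTensorToQuot :
    tensorOver R ract lact →+ TensST lam mu ⧸ (diffTensor lam mu).range :=
  tensorOver.lift
    (QuotientAddGroup.lift₂ _ _ ((tensorOver.mk₂ _ _).compr₂ (QuotientAddGroup.mk' _))
      (fun s hs => by
        ext t
        exact (QuotientAddGroup.eq_zero_iff _).2
          (eST_mem_range_diffTensor_of_mem_range_left lam mu hs t))
      (fun t ht s => (QuotientAddGroup.eq_zero_iff _).2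
        (eST_mem_range_diffTensor_of_mem_range_right lam mu s ht)))
    fun a r b => by
      induction a using QuotientAddGroup.induction_on
      induction b using QuotientAddGroup.induction_on
      rw [hract, hlact]
      exact congrArg QuotientAddGroup.mk (eST_rel lam mu _ r _)

theorem cokerTensorToQuot_mk (s : S) (t : T) :
    cokerTensorToQuot hract hlact (tensorOver.mk R ract lact s t) = eST lam mu s t :=
  rfl

include hract hlact in
theorem surjective_diffTensor_iff_subsingleton :
    Function.Surjective (diffTensor lam mu) ↔ Subsingleton (tensorOver R ract lact) := by
  constructor
  · intro h
    refine subsingleton_of_forall_eq 0 fun x => ?_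
    obtain ⟨y, rfl⟩ := projCokerTensor_surjective hract hlact x
    obtain ⟨p, rfl⟩ := h y
    exact projCokerTensor_diffTensor hract hlact p
  · intro h
    rw [← AddMonoidHom.range_eq_top, eq_top_iff]
    rintro x -
    induction x using tensorOver.induction_on with
    | zero => exact zero_mem _
    | mk s t =>
      have h0 := cokerTensorToQuot_mk hract hlact s t
      rw [Subsingleton.elim (tensorOver.mk R ract lact _ _) 0, map_zero] at h0
      exact (QuotientAddGroup.eq_zero_iff _).1 h0.symm
    | add x y hx hy => exact add_mem hx hy

end

theorem stmt2_general {M : Type u} [AddCommGroup M] [Module S M] [Module Tᵐᵒᵖ M]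
    (lam : R →+* S) (mu : R →+* T) (m : M)
    (hEC : IsExactContext lam mu m)
    (γ : TensST lam mu →+ M)
    (hγ : ∀ (s : S) (t : T), γ (eST lam mu s t) = s • (op t • m))
    (ract : (S ⧸ lam.toAddMonoidHom.range) → R → (S ⧸ lam.toAddMonoidHom.range))
    (hract : ∀ (s : S) (r : R),
      ract (QuotientAddGroup.mk s) r = QuotientAddGroup.mk (s * lam r))
    (lact : R → (T ⧸ mu.toAddMonoidHom.range) → (T ⧸ mu.toAddMonoidHom.range))
    (hlact : ∀ (r : R) (t : T),
      lact r (QuotientAddGroup.mk t) = QuotientAddGroup.mk (mu r * t)) :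
    Function.Bijective γ ↔ Subsingleton (tensorOver R ract lact) := by
  obtain ⟨-, hker, hsurj⟩ := hEC
  have hγδ (p : S × T) : γ (diffTensor lam mu p) = p.1 • m - op p.2 • m := by
    simp [diffTensor_apply, hγ]
  have hγδ_surj : Function.Surjective (γ.comp (diffTensor lam mu)) := fun x =>
    let ⟨s, t, hx⟩ := hsurj x
    ⟨(s, t), (hγδ _).trans hx.symm⟩
  have hγδ_ker : (γ.comp (diffTensor lam mu)).ker ≤ (diffTensor lam mu).ker := by
    rintro ⟨s, t⟩ h
    obtain ⟨r, rfl, rfl⟩ := (hker s t).1 (sub_eq_zero.1 ((hγδ _).symm.trans h))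
    exact diffTensor_map_eq_zero lam mu r
  rw [← surjective_diffTensor_iff_subsingleton hract hlact,
    ← AddMonoidHom.injective_iff_surjective_of_surjective_comp _ _ hγδ_surj hγδ_ker]
  exact and_iff_left (Function.Surjective.of_comp (g := diffTensor lam mu) hγδ_surj)

/-- For an exact context `(λ, μ, M, m)`, the canonical map
`γ : S ⊗_R T → M`, `s ⊗ t ↦ s·m·t`, is an isomorphism iff
`Coker(λ) ⊗_R Coker(μ) = 0`.  Here `Coker(λ) = S/Im(λ)` carries the induced right
`R`-action `ract` and `Coker(μ) = T/Im(μ)` the induced left `R`-action `lact`. -/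
theorem stmt2 {M : Type u} [AddCommGroup M] [Module S M] [Module Tᵐᵒᵖ M]
    [SMulCommClass S Tᵐᵒᵖ M]
    (lam : R →+* S) (mu : R →+* T) (m : M)
    (hEC : IsExactContext lam mu m)
    (γ : TensST lam mu →+ M)
    (hγ : ∀ (s : S) (t : T), γ (eST lam mu s t) = s • (op t • m))
    (ract : (S ⧸ lam.toAddMonoidHom.range) → R → (S ⧸ lam.toAddMonoidHom.range))
    (hract : ∀ (s : S) (r : R),
      ract (QuotientAddGroup.mk s) r = QuotientAddGroup.mk (s * lam r))
    (lact : R → (T ⧸ mu.toAddMonoidHom.range) → (T ⧸ mu.toAddMonoidHom.range))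
    (hlact : ∀ (r : R) (t : T),
      lact r (QuotientAddGroup.mk t) = QuotientAddGroup.mk (mu r * t)) :
    Function.Bijective γ ↔ Subsingleton (tensorOver R ract lact) :=
  stmt2_general lam mu m hEC γ hγ ract hract lact hlact

end
end

section
/- Let (λ, μ, M, m) be an exact context and T ⊠_R S its noncommutative tensor product. Then the map β: M → T ⊠_R S, sending x = s_x m + m t_x to 1 ⊗ s_x + t_x ⊗ 1, is a homomorphism of (S,T)-bimodules with β(m) = 1 ⊗ 1, where T ⊠_R S is viewed as an (S,T)-bimodule via the ring homomorphisms ρ: S → T ⊠_R S, s ↦ 1 ⊗ s, and φ: T → T ⊠_R S, t ↦ t ⊗ 1. -/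
/-! The additive map `S × T → M`, `(s, t) ↦ s m + m t`, is onto, and by exactness its kernel
consists of the pairs `(λ r, -μ r)`. These are killed by `(s, t) ↦ 1 ⊗ s + t ⊗ 1` because
`1 ⊗ λ r = μ r ⊗ 1` in `T ⊗_R S`, so this map factors through `M`, giving `β`. By additivity,
bimodule linearity only has to be checked on `s' m` and `m t'`, where the defining formula of
`∘` gives `(1 ⊗ s)(1 ⊗ s') = 1 ⊗ s s'`, `(t' ⊗ 1)(t ⊗ 1) = t' t ⊗ 1` and
`(1 ⊗ s)(t ⊗ 1) = β (s m t)`.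
-/

open MulOpposite
open scoped TensorProduct

universe u

section
variable {R S T : Type u} [Ring R] [Ring S] [Ring T]

/-- `T ⊗_R S`, where `T` is a right `R`-module via `μ` and `S` a left `R`-module via `λ`. -/
noncomputable abbrev TensTS (lam : R →+* S) (mu : R →+* T) : Type u :=
  tensorOver R (fun (t : T) (r : R) => t * mu r) (fun (r : R) (s : S) => lam r * s)

/-- The elementary tensor `t ⊗ s` in `T ⊗_R S`. -/
noncomputable def eTS (lam : R →+* S) (mu : R →+* T) (t : T) (s : S) : TensTS lam mu :=
  QuotientAddGroup.mk (t ⊗ₜ[ℤ] s)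

section ElementaryTensors
variable (lam : R →+* S) (mu : R →+* T)

lemma eTS_add_left (t t' : T) (s : S) :
    eTS lam mu (t + t') s = eTS lam mu t s + eTS lam mu t' s := by
  simp only [eTS, TensorProduct.add_tmul]; rfl

lemma eTS_add_right (t : T) (s s' : S) :
    eTS lam mu t (s + s') = eTS lam mu t s + eTS lam mu t s' := by
  simp only [eTS, TensorProduct.tmul_add]; rfl

lemma eTS_zero_left (s : S) : eTS lam mu 0 s = 0 := by
  simp only [eTS, TensorProduct.zero_tmul]; rfl

lemma eTS_zero_right (t : T) : eTS lam mu t 0 = 0 := by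
  simp only [eTS, TensorProduct.tmul_zero]; rfl

lemma eTS_neg_left (t : T) (s : S) : eTS lam mu (-t) s = -eTS lam mu t s := by
  simp only [eTS, TensorProduct.neg_tmul]; rfl

lemma eTS_mul_mu (t : T) (r : R) (s : S) :
    eTS lam mu (t * mu r) s = eTS lam mu t (lam r * s) :=
  QuotientAddGroup.eq_iff_sub_mem.mpr (AddSubgroup.subset_closure ⟨t, r, s, rfl⟩)

end ElementaryTensors

section ExactContext
variable {M : Type u} [AddCommGroup M] [Module S M] [Module Tᵐᵒᵖ M]

def contextMap (m : M) : S × T →+ M :=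
  AddMonoidHom.mk' (fun p => p.1 • m + op p.2 • m) fun p q => by
    simp only [Prod.fst_add, Prod.snd_add, op_add, add_smul]; abel

noncomputable def contextTensor (lam : R →+* S) (mu : R →+* T) : S × T →+ TensTS lam mu :=
  AddMonoidHom.mk' (fun p => eTS lam mu 1 p.1 + eTS lam mu p.2 1) fun p q => by
    simp only [Prod.fst_add, Prod.snd_add, eTS_add_left, eTS_add_right]; abel

variable {lam : R →+* S} {mu : R →+* T} {m : M}

namespace IsExactContext

lemma contextMap_surjective (hEC : IsExactContext lam mu m) :
    Function.Surjective (contextMap (S := S) (T := T) m) := fun x => by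
  obtain ⟨s, t, rfl⟩ := hEC.2.2 x
  exact ⟨(s, -t), by simp [contextMap, sub_eq_add_neg]⟩

lemma ker_contextMap_le (hEC : IsExactContext lam mu m) :
    (contextMap m).ker ≤ (contextTensor lam mu).ker := by
  rintro ⟨s, t⟩ h
  have h : s • m = op (-t) • m := by
    simpa [contextMap, eq_neg_iff_add_eq_zero] using h
  obtain ⟨r, rfl, hr⟩ := (hEC.2.1 _ _).mp h
  have hbal := eTS_mul_mu lam mu 1 r 1
  rw [one_mul, mul_one, hr, eTS_neg_left] at hbal
  simp [contextTensor, ← hbal]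

noncomputable def beta (hEC : IsExactContext lam mu m) : M →+ TensTS lam mu :=
  (contextMap m).liftOfSurjective hEC.contextMap_surjective
    ⟨contextTensor lam mu, hEC.ker_contextMap_le⟩

variable (hEC : IsExactContext lam mu m)

lemma beta_smul_add_op_smul (s : S) (t : T) :
    hEC.beta (s • m + op t • m) = eTS lam mu 1 s + eTS lam mu t 1 := by
  change hEC.beta (contextMap m (s, t)) = _
  rw [beta, AddMonoidHom.liftOfRightInverse_comp_apply]
  rfl

lemma beta_smul (s : S) : hEC.beta (s • m) = eTS lam mu 1 s := by
  simpa [eTS_zero_left] using hEC.beta_smul_add_op_smul s 0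

lemma beta_op_smul (t : T) : hEC.beta (op t • m) = eTS lam mu t 1 := by
  simpa [eTS_zero_right] using hEC.beta_smul_add_op_smul 0 t

end IsExactContext

section Multiplication
variable (mul : TensTS lam mu → TensTS lam mu → TensTS lam mu)
  (hchar : ∀ (t₁ : T) (s₁ : S) (t₂ : T) (s₂ : S) (u : S) (v : T),
    s₁ • (op t₂ • m) = u • m + op v • m →
    mul (eTS lam mu t₁ s₁) (eTS lam mu t₂ s₂) =
      eTS lam mu t₁ (u * s₂) + eTS lam mu (t₁ * v) s₂)
include hchar

lemma mul_eTS_eTS_one_left (t : T) (s s' : S) :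
    mul (eTS lam mu t s) (eTS lam mu 1 s') = eTS lam mu t (s * s') := by
  rw [hchar t s 1 s' s 0 (by simp), mul_zero, eTS_zero_left, add_zero]

lemma mul_eTS_one_right_eTS (t' t : T) (s : S) :
    mul (eTS lam mu t' 1) (eTS lam mu t s) = eTS lam mu (t' * t) s := by
  rw [hchar t' 1 t s 0 t (by simp), zero_mul, eTS_zero_right, zero_add]

lemma mul_eTS_one_eTS_one (hEC : IsExactContext lam mu m) (s : S) (t : T) :
    mul (eTS lam mu 1 s) (eTS lam mu t 1) = hEC.beta (s • op t • m) := by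
  obtain ⟨⟨u, v⟩, huv⟩ := hEC.contextMap_surjective (s • op t • m)
  rw [← huv, hchar 1 s t 1 u v huv.symm, mul_one, one_mul]
  exact (hEC.beta_smul_add_op_smul u v).symm

lemma beta_smul_eq_mul (hdr : ∀ x y z, mul x (y + z) = mul x y + mul x z)
    (hEC : IsExactContext lam mu m) (s : S) (x : M) :
    hEC.beta (s • x) = mul (eTS lam mu 1 s) (hEC.beta x) := by
  obtain ⟨⟨s', t'⟩, rfl⟩ := hEC.contextMap_surjective x
  change hEC.beta (s • (s' • m + op t' • m)) = mul _ (hEC.beta (s' • m + op t' • m))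
  rw [hEC.beta_smul_add_op_smul, hdr, mul_eTS_eTS_one_left mul hchar,
    mul_eTS_one_eTS_one mul hchar hEC, smul_add, smul_smul, map_add, hEC.beta_smul]

lemma beta_op_smul_eq_mul [SMulCommClass S Tᵐᵒᵖ M]
    (hdl : ∀ x y z, mul (x + y) z = mul x z + mul y z)
    (hEC : IsExactContext lam mu m) (t : T) (x : M) :
    hEC.beta (op t • x) = mul (hEC.beta x) (eTS lam mu t 1) := by
  obtain ⟨⟨s', t'⟩, rfl⟩ := hEC.contextMap_surjective x
  change hEC.beta (op t • (s' • m + op t' • m)) = mul (hEC.beta (s' • m + op t' • m)) _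
  rw [hEC.beta_smul_add_op_smul, hdl, mul_eTS_one_eTS_one mul hchar hEC,
    mul_eTS_one_right_eTS mul hchar, smul_add, ← smul_comm s' (op t) m, smul_smul, ← op_mul,
    map_add, hEC.beta_op_smul]

end Multiplication

end ExactContext

/-- For an exact context `(λ, μ, M, m)` with noncommutative tensor
product `T ⊠_R S` (multiplication `mul` characterized as in the paper), the map
`β : M → T ⊠_R S` sending `x = s_x·m + m·t_x` to `1 ⊗ s_x + t_x ⊗ 1` is a
well-defined homomorphism of `(S,T)`-bimodules with `β(m) = 1 ⊗ 1`, where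
`T ⊠_R S` is an `(S,T)`-bimodule via `ρ : s ↦ 1 ⊗ s` and `φ : t ↦ t ⊗ 1`. -/
theorem stmt6 {M : Type u} [AddCommGroup M] [Module S M] [Module Tᵐᵒᵖ M]
    [SMulCommClass S Tᵐᵒᵖ M]
    (lam : R →+* S) (mu : R →+* T) (m : M)
    (hEC : IsExactContext lam mu m)
    (mul : TensTS lam mu → TensTS lam mu → TensTS lam mu)
    (hdl : ∀ x y z : TensTS lam mu, mul (x + y) z = mul x z + mul y z)
    (hdr : ∀ x y z : TensTS lam mu, mul x (y + z) = mul x y + mul x z)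
    (hchar : ∀ (t₁ : T) (s₁ : S) (t₂ : T) (s₂ : S) (u : S) (v : T),
        s₁ • (op t₂ • m) = u • m + op v • m →
        mul (eTS lam mu t₁ s₁) (eTS lam mu t₂ s₂) =
          eTS lam mu t₁ (u * s₂) + eTS lam mu (t₁ * v) s₂) :
    ∃ β : M →+ TensTS lam mu,
      (∀ (x : M) (s : S) (t : T), x = s • m + op t • m →
        β x = eTS lam mu 1 s + eTS lam mu t 1) ∧
      β m = eTS lam mu 1 1 ∧
      (∀ (s : S) (x : M), β (s • x) = mul (eTS lam mu 1 s) (β x)) ∧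
      (∀ (t : T) (x : M), β (op t • x) = mul (β x) (eTS lam mu t 1)) := by
  exact ⟨hEC.beta, fun x s t hx => hx ▸ hEC.beta_smul_add_op_smul s t,
    by simpa using hEC.beta_smul 1, beta_smul_eq_mul mul hchar hdr hEC,
    beta_op_smul_eq_mul mul hchar hdl hEC⟩

end
end

section
/- Let R ⊆ S be an extension of rings (subring with the same identity), and let π: S → S/R be the canonical projection of left R-modules. Then π is a rigid morphism; that is, Hom_R(S, S/R) = End_R(S)·π + π·End_R(S/R), where End_R(S) acts by precomposition and End_R(S/R) by postcomposition. -/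
/-! Write `f 1 = π x`. Left linearity forces `f r = π (r x)` for `r ∈ R`, so `f - π ∘ (· * x)`
vanishes on `R` and descends to an `R`-linear endomorphism `h` of `S/R`, while right
multiplication by `x` is an `R`-linear endomorphism `g` of `S`; then `f = π ∘ g + h ∘ π`. -/

section RigidProjection

variable {S : Type*} [Ring S] {R : Subring S}
  {act : R → (S ⧸ R.toAddSubgroup) → (S ⧸ R.toAddSubgroup)}

local notation "π" => (QuotientAddGroup.mk : S → S ⧸ R.toAddSubgroup)

theorem quotient_act_sub
    (hact : ∀ (r : R) (s : S), act r (π s) = π ((r : S) * s))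
    (r : R) (a b : S ⧸ R.toAddSubgroup) : act r (a - b) = act r a - act r b := by
  induction a using QuotientAddGroup.induction_on
  induction b using QuotientAddGroup.induction_on
  rw [← QuotientAddGroup.mk_sub, hact, hact, hact, mul_sub, QuotientAddGroup.mk_sub]

theorem map_subring_eq_mk_mul {f : S →+ S ⧸ R.toAddSubgroup}
    (hact : ∀ (r : R) (s : S), act r (π s) = π ((r : S) * s))
    (hf : ∀ (r : R) (s : S), f ((r : S) * s) = act r (f s)) {x : S} (hx : π x = f 1) (r : R) :
    f r = π ((r : S) * x) := by
  simpa [← hx, hact] using hf r 1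

def subMulRight (f : S →+ S ⧸ R.toAddSubgroup) (x : S) : S →+ S ⧸ R.toAddSubgroup :=
  f - (QuotientAddGroup.mk' R.toAddSubgroup).comp (AddMonoidHom.mulRight x)

theorem subMulRight_apply (f : S →+ S ⧸ R.toAddSubgroup) (x s : S) :
    subMulRight f x s = f s - π (s * x) :=
  rfl

theorem subMulRight_map_mul
    (hact : ∀ (r : R) (s : S), act r (π s) = π ((r : S) * s)) {f : S →+ S ⧸ R.toAddSubgroup}
    (hf : ∀ (r : R) (s : S), f ((r : S) * s) = act r (f s)) (x : S) (r : R) (s : S) :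
    subMulRight f x ((r : S) * s) = act r (subMulRight f x s) := by
  rw [subMulRight_apply, subMulRight_apply, quotient_act_sub hact, hf, hact, mul_assoc]

theorem subring_le_ker_subMulRight
    (hact : ∀ (r : R) (s : S), act r (π s) = π ((r : S) * s)) {f : S →+ S ⧸ R.toAddSubgroup}
    (hf : ∀ (r : R) (s : S), f ((r : S) * s) = act r (f s)) {x : S} (hx : π x = f 1) :
    R.toAddSubgroup ≤ (subMulRight f x).ker := fun r hr => by
  rw [AddMonoidHom.mem_ker, subMulRight_apply,
    map_subring_eq_mk_mul hact hf hx ⟨r, hr⟩, sub_self]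

theorem lift_map_act (hact : ∀ (r : R) (s : S), act r (π s) = π ((r : S) * s))
    {k : S →+ S ⧸ R.toAddSubgroup} (hk : ∀ (r : R) (s : S), k ((r : S) * s) = act r (k s))
    (hR : R.toAddSubgroup ≤ k.ker) (r : R) (y : S ⧸ R.toAddSubgroup) :
    QuotientAddGroup.lift _ k hR (act r y) = act r (QuotientAddGroup.lift _ k hR y) := by
  induction y using QuotientAddGroup.induction_on
  rw [hact, QuotientAddGroup.lift_mk, QuotientAddGroup.lift_mk, hk]

end RigidProjection

/-- Let `R ⊆ S` be an extension of rings and `π : S → S/R` the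
canonical projection of left `R`-modules.  Then `π` is a rigid morphism:
`Hom_R(S, S/R) = End_R(S)·π + π·End_R(S/R)`.  The left `R`-module structure on the
quotient group `S/R` is given by `act r (class s) = class (r·s)`. -/
theorem stmt10 {S : Type*} [Ring S] (R : Subring S)
    (act : R → (S ⧸ R.toAddSubgroup) → (S ⧸ R.toAddSubgroup))
    (hact : ∀ (r : R) (s : S),
      act r (QuotientAddGroup.mk s) = QuotientAddGroup.mk ((r : S) * s)) :
    ∀ f : S →+ S ⧸ R.toAddSubgroup,
      (∀ (r : R) (s : S), f ((r : S) * s) = act r (f s)) →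
      ∃ (g : S →+ S) (h : (S ⧸ R.toAddSubgroup) →+ (S ⧸ R.toAddSubgroup)),
        (∀ (r : R) (s : S), g ((r : S) * s) = (r : S) * g s) ∧
        (∀ (r : R) (x : S ⧸ R.toAddSubgroup), h (act r x) = act r (h x)) ∧
        (∀ s : S, f s = QuotientAddGroup.mk (g s) + h (QuotientAddGroup.mk s)) := by
  intro f hf
  obtain ⟨x, hx⟩ := QuotientAddGroup.mk_surjective (f 1)
  have hR := subring_le_ker_subMulRight hact hf hx
  refine ⟨AddMonoidHom.mulRight x, QuotientAddGroup.lift _ (subMulRight f x) hR,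
    fun r s => mul_assoc _ _ _, lift_map_act hact (subMulRight_map_mul hact hf x) hR, ?_⟩
  intro s
  rw [QuotientAddGroup.lift_mk, subMulRight_apply, AddMonoidHom.mulRight_apply, add_sub_cancel]
end

section
/- Let λ: R → S be a ring epimorphism. If R is commutative, then S is commutative. -/
universe u

/-- `s ↦ !![s, s * y - y * s; 0, s]`: the inner derivation `[·, y]` is a derivation, so it
can be placed above the diagonal of a ring homomorphism into upper triangular matrices. -/
def commutatorMatrixHom {S : Type*} [Ring S] (y : S) : S →+* Matrix (Fin 2) (Fin 2) S where
  toFun s := !![s, s * y - y * s; 0, s]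
  map_one' := by
    ext i j
    fin_cases i <;> fin_cases j <;> simp
  map_mul' s t := by
    rw [Matrix.mul_fin_two]
    ext i j
    fin_cases i <;> fin_cases j <;> simp
    noncomm_ring
  map_zero' := by
    ext i j
    fin_cases i <;> fin_cases j <;> simp
  map_add' s t := by
    ext i j
    fin_cases i <;> fin_cases j <;> simp
    noncomm_ring

theorem commutatorMatrixHom_apply {S : Type*} [Ring S] (y s : S) :
    commutatorMatrixHom y s = !![s, s * y - y * s; 0, s] :=
  rfl

theorem commutatorMatrixHom_eq_iff {S : Type*} [Ring S] (y y' s : S) :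
    commutatorMatrixHom y s = commutatorMatrixHom y' s ↔ s * y - y * s = s * y' - y' * s := by
  simp only [commutatorMatrixHom_apply, ← Matrix.ext_iff, Fin.forall_fin_two, Matrix.of_apply,
    Matrix.cons_val', Matrix.cons_val_zero, Matrix.cons_val_one, Matrix.empty_val',
    Matrix.cons_val_fin_one, true_and, and_true]

/-- Over an epimorphism of rings, an element commuting with the image commutes with everything:
`commutatorMatrixHom y` and `commutatorMatrixHom 0` agree on the image, hence everywhere. -/
theorem commute_of_forall_commute_map_of_epi {R : Type*} {S : Type u} [NonAssocSemiring R]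
    [Ring S] (lam : R →+* S)
    (hepi : ∀ (T : Type u) [Ring T], ∀ f g : S →+* T, f.comp lam = g.comp lam → f = g)
    {y : S} (hy : ∀ r : R, Commute (lam r) y) (s : S) : Commute s y := by
  have hcomp : (commutatorMatrixHom y).comp lam = (commutatorMatrixHom 0).comp lam := by
    ext1 r
    simp only [RingHom.comp_apply, commutatorMatrixHom_eq_iff, (hy r).eq, sub_self, mul_zero,
      zero_mul]
  have hs := (commutatorMatrixHom_eq_iff y 0 s).mp
    (congrArg (· s) (hepi _ _ _ hcomp))
  rw [mul_zero, zero_mul, sub_zero, sub_eq_zero] at hs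
  exact hs

/-- Let `λ : R → S` be a ring epimorphism (an epimorphism in the
category of unital rings).  If `R` is commutative, then `S` is commutative. -/
theorem stmt13 {R S : Type u} [CommRing R] [Ring S] (lam : R →+* S)
    (hepi : ∀ (T : Type u) [Ring T], ∀ f g : S →+* T, f.comp lam = g.comp lam → f = g) :
    ∀ x y : S, x * y = y * x := by
  have hcentral (r : R) (s : S) : Commute s (lam r) :=
    commute_of_forall_commute_map_of_epi lam hepi
      (fun r' => (Commute.all r' r).map lam) s
  intro x y
  exact commute_of_forall_commute_map_of_epi lam hepi (fun r => (hcentral r y).symm) x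
end

section
/- Let (A, C, X, Y, f, g) be a Morita context with associated Morita context ring Γ = [[A, X],[Y, C]]. Let R be the diagonal subring [[A,0],[0,C]], S the upper triangular subring [[A,X],[0,C]], T the lower triangular subring [[A,0],[Y,C]], M = Γ as an (S,T)-bimodule, and m the identity matrix. Then (incl_S, incl_T, M, m) is an exact context, i.e. 0 → R → S ⊕ T → Γ → 0 is exact with maps r ↦ (r, r) and (s, t) ↦ sm − mt. -/
/-!
Since `m` is the identity of the Morita context ring, `s·m − m·t = s − t`, so the sequence
is the decomposition of `Γ` into its upper and lower triangular parts: a difference `s − t`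
vanishes exactly when `s = t` is diagonal, and every `[[a, x], [y, c]]` is
`[[a, x], [0, c]] − [[0, 0], [−y, 0]]`.
-/

open MulOpposite

section MoritaContextRing

variable {A C X Y : Type*} [Ring A] [Ring C] [AddCommGroup X] [AddCommGroup Y]
  [Module A X] [Module Cᵐᵒᵖ X] [Module C Y] [Module Aᵐᵒᵖ Y]

/-- The product `[[a, x], [y, c]] · [[a', x'], [y', c']]` of the Morita context ring,
with an element stored as `(a, x, y, c)`. -/
def moritaMul (f : X →+ Y →+ A) (g : Y →+ X →+ C) (p q : A × X × Y × C) : A × X × Y × C :=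
  (p.1 * q.1 + f p.2.1 q.2.2.1,
   p.1 • q.2.1 + op q.2.2.2 • p.2.1,
   p.2.2.2 • q.2.2.1 + op q.1 • p.2.2.1,
   p.2.2.2 * q.2.2.2 + g p.2.2.1 q.2.1)

variable (f : X →+ Y →+ A) (g : Y →+ X →+ C)

@[simp]
theorem moritaMul_one_right (p : A × X × Y × C) : moritaMul f g p (1, 0, 0, 1) = p := by
  simp [moritaMul]

@[simp]
theorem moritaMul_one_left (q : A × X × Y × C) : moritaMul f g (1, 0, 0, 1) q = q := by
  simp [moritaMul]

end MoritaContextRing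

section TriangularDecomposition

variable {A X Y C : Type*}

theorem diagonal_injective [Zero X] [Zero Y] :
    Function.Injective (fun p : A × C => ((p.1, 0, 0, p.2) : A × X × Y × C)) := by
  intro p q h
  simp only [Prod.mk.injEq] at h
  exact Prod.ext h.1 h.2.2.2

theorem upper_eq_lower_iff [Zero X] [Zero Y] {s t : A × X × Y × C}
    (hs : s.2.2.1 = 0) (ht : t.2.1 = 0) :
    s = t ↔ ∃ (a : A) (c : C), s = (a, 0, 0, c) ∧ t = (a, 0, 0, c) := by
  constructor
  · rintro rfl
    obtain ⟨a, x, y, c⟩ := s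
    simp only at hs ht
    exact ⟨a, c, by rw [hs, ht], by rw [hs, ht]⟩
  · rintro ⟨a, c, rfl, rfl⟩
    rfl

theorem exists_upper_sub_lower [AddGroup A] [AddGroup X] [AddGroup Y] [AddGroup C]
    (γ : A × X × Y × C) :
    ∃ s t : A × X × Y × C, s.2.2.1 = 0 ∧ t.2.1 = 0 ∧ γ = s - t := by
  obtain ⟨a, x, y, c⟩ := γ
  exact ⟨(a, x, 0, c), (0, 0, -y, 0), rfl, rfl, by simp⟩

end TriangularDecomposition

theorem stmt15_general {A C X Y : Type*} [Ring A] [Ring C]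
    [AddCommGroup X] [AddCommGroup Y]
    [Module A X] [Module Cᵐᵒᵖ X]
    [Module C Y] [Module Aᵐᵒᵖ Y]
    (f : X →+ Y →+ A) (g : Y →+ X →+ C)
    (mulG : (A × X × Y × C) → (A × X × Y × C) → (A × X × Y × C))
    (hmul : ∀ p q : A × X × Y × C, mulG p q =
      (p.1 * q.1 + f p.2.1 q.2.2.1,
       p.1 • q.2.1 + op q.2.2.2 • p.2.1,
       p.2.2.2 • q.2.2.1 + op q.1 • p.2.2.1,
       p.2.2.2 * q.2.2.2 + g p.2.2.1 q.2.1)) :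
    Function.Injective (fun p : A × C =>
      (((p.1, 0, 0, p.2) : A × X × Y × C), ((p.1, 0, 0, p.2) : A × X × Y × C))) ∧
    (∀ s t : A × X × Y × C, s.2.2.1 = 0 → t.2.1 = 0 →
      (mulG s ((1, 0, 0, 1) : A × X × Y × C) = mulG ((1, 0, 0, 1) : A × X × Y × C) t ↔
        ∃ (a : A) (c : C), s = (a, 0, 0, c) ∧ t = (a, 0, 0, c))) ∧
    (∀ γ : A × X × Y × C, ∃ s t : A × X × Y × C, s.2.2.1 = 0 ∧ t.2.1 = 0 ∧
      γ = mulG s ((1, 0, 0, 1) : A × X × Y × C) -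
          mulG ((1, 0, 0, 1) : A × X × Y × C) t) := by
  obtain rfl : mulG = moritaMul f g := funext₂ hmul
  simp only [moritaMul_one_right, moritaMul_one_left]
  exact ⟨fun p q h => diagonal_injective (congrArg Prod.fst h),
    fun s t hs ht => upper_eq_lower_iff hs ht, exists_upper_sub_lower⟩

/-- Let `(A, C, X, Y, f, g)` be a Morita context with Morita context
ring `Γ = [[A, X], [Y, C]]` (realized as `A × X × Y × C` with the matrix-style
multiplication `mulG`).  Let `R` be the diagonal subring, `S` the upper triangular
subring (elements with vanishing `Y`-component), `T` the lower triangular subring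
(elements with vanishing `X`-component), `M = Γ` as an `(S,T)`-bimodule and `m` the
identity matrix `(1,0,0,1)`.  Then `(incl_S, incl_T, M, m)` is an exact context:
`0 → R → S ⊕ T → Γ → 0` is exact, with maps `r ↦ (r, r)` and `(s, t) ↦ s·m − m·t`. -/
theorem stmt15 {A C X Y : Type*} [Ring A] [Ring C]
    [AddCommGroup X] [AddCommGroup Y]
    [Module A X] [Module Cᵐᵒᵖ X] [SMulCommClass A Cᵐᵒᵖ X]
    [Module C Y] [Module Aᵐᵒᵖ Y] [SMulCommClass C Aᵐᵒᵖ Y]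
    (f : X →+ Y →+ A) (g : Y →+ X →+ C)
    (hfA : ∀ (a : A) (x : X) (y : Y), f (a • x) y = a * f x y)
    (hfC : ∀ (c : C) (x : X) (y : Y), f (op c • x) y = f x (c • y))
    (hfA' : ∀ (a : A) (x : X) (y : Y), f x (op a • y) = f x y * a)
    (hgC : ∀ (c : C) (y : Y) (x : X), g (c • y) x = c * g y x)
    (hgA : ∀ (a : A) (y : Y) (x : X), g (op a • y) x = g y (a • x))
    (hgC' : ∀ (c : C) (y : Y) (x : X), g y (op c • x) = g y x * c)
    (hassoc1 : ∀ (x₁ : X) (y₁ : Y) (x₂ : X), f x₁ y₁ • x₂ = op (g y₁ x₂) • x₁)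
    (hassoc2 : ∀ (y₁ : Y) (x₁ : X) (y₂ : Y), g y₁ x₁ • y₂ = op (f x₁ y₂) • y₁)
    (mulG : (A × X × Y × C) → (A × X × Y × C) → (A × X × Y × C))
    (hmul : ∀ p q : A × X × Y × C, mulG p q =
      (p.1 * q.1 + f p.2.1 q.2.2.1,
       p.1 • q.2.1 + op q.2.2.2 • p.2.1,
       p.2.2.2 • q.2.2.1 + op q.1 • p.2.2.1,
       p.2.2.2 * q.2.2.2 + g p.2.2.1 q.2.1)) :
    Function.Injective (fun p : A × C =>
      (((p.1, 0, 0, p.2) : A × X × Y × C), ((p.1, 0, 0, p.2) : A × X × Y × C))) ∧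
    (∀ s t : A × X × Y × C, s.2.2.1 = 0 → t.2.1 = 0 →
      (mulG s ((1, 0, 0, 1) : A × X × Y × C) = mulG ((1, 0, 0, 1) : A × X × Y × C) t ↔
        ∃ (a : A) (c : C), s = (a, 0, 0, c) ∧ t = (a, 0, 0, c))) ∧
    (∀ γ : A × X × Y × C, ∃ s t : A × X × Y × C, s.2.2.1 = 0 ∧ t.2.1 = 0 ∧
      γ = mulG s ((1, 0, 0, 1) : A × X × Y × C) -
          mulG ((1, 0, 0, 1) : A × X × Y × C) t) :=
  stmt15_general f g mulG hmul
end

section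
/- Let R ⊆ S and R ⊆ T be strictly pure extensions with S = R ⊕ X and T = R ⊕ Y, where X is an ideal of S, Y is an ideal of T, and the decompositions are of (R,R)-bimodules. Define a multiplication on M := R ⊕ X ⊕ Y by (r₁+x₁+y₁)(r₂+x₂+y₂) = r₁r₂ + (r₁x₂ + x₁r₂ + x₁x₂) + (r₁y₂ + y₁r₂ + y₁y₂). Then M is an associative unital ring containing S and T as subrings, and (incl_S, incl_T, M, 1) is an exact context. -/
/-!
Since `X` is a two-sided ideal complementing `λ R` in `S`, the projection `S = R ⊕ X → R` is a ring
homomorphism `π_S` retracting `λ`; likewise `π_T : T → R` retracts `μ`. The ring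
`M = R ⊕ X ⊕ Y` is the fibre product `{(s, t) ∈ S × T | π_S s = π_T t}`, via
`r + x + y ↦ (λ r + x, μ r + y)`: its componentwise multiplication is the one prescribed, and
`X · Y = 0` because `π_T` kills `Y` and `π_S` kills `X`. In it `S` and `T` sit as
`s ↦ (s, μ (π_S s))` and `t ↦ (λ (π_T t), t)`, and exactness of the context only uses that
`π_S ∘ λ = id` and `π_T ∘ μ = id`.
-/

namespace StrictlyPure

section Retraction

variable {R S : Type*} [Ring R] [Ring S] {lam : R →+* S} {X : AddSubgroup S}

theorem existsUnique_sub_mem (hdec : ∀ s : S, ∃! p : R × X, s = lam p.1 + (p.2 : S)) (s : S) :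
    ∃! r : R, s - lam r ∈ X := by
  obtain ⟨⟨r, x⟩, hs, huniq⟩ := hdec s
  refine ⟨r, by simp [hs], fun r' hr' => ?_⟩
  exact congrArg Prod.fst (huniq (r', ⟨s - lam r', hr'⟩) (by simp))

variable (hdec : ∀ s : S, ∃! p : R × X, s = lam p.1 + (p.2 : S))

noncomputable def component (s : S) : R := (existsUnique_sub_mem hdec s).exists.choose

theorem sub_component_mem (s : S) : s - lam (component hdec s) ∈ X :=
  (existsUnique_sub_mem hdec s).exists.choose_spec

theorem component_eq_iff {s : S} {r : R} : component hdec s = r ↔ s - lam r ∈ X :=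
  ⟨fun h => h ▸ sub_component_mem hdec s,
    (existsUnique_sub_mem hdec s).unique (sub_component_mem hdec s)⟩

noncomputable def retraction (hXl : ∀ s : S, ∀ x ∈ X, s * x ∈ X)
    (hXr : ∀ s : S, ∀ x ∈ X, x * s ∈ X) : S →+* R where
  toFun := component hdec
  map_one' := (component_eq_iff hdec).2 (by simp)
  map_mul' s₁ s₂ := by
    refine (component_eq_iff hdec).2 ?_
    have h₁ := sub_component_mem hdec s₁
    have h₂ := sub_component_mem hdec s₂
    set r₁ := component hdec s₁
    set r₂ := component hdec s₂
    have : s₁ * s₂ - lam (r₁ * r₂) = (s₁ - lam r₁) * s₂ + lam r₁ * (s₂ - lam r₂) := by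
      rw [map_mul]; noncomm_ring
    rw [this]
    exact X.add_mem (hXr _ _ h₁) (hXl _ _ h₂)
  map_zero' := (component_eq_iff hdec).2 (by simp)
  map_add' s₁ s₂ := by
    refine (component_eq_iff hdec).2 ?_
    rw [map_add, add_sub_add_comm]
    exact X.add_mem (sub_component_mem hdec s₁) (sub_component_mem hdec s₂)

variable (hXl : ∀ s : S, ∀ x ∈ X, s * x ∈ X) (hXr : ∀ s : S, ∀ x ∈ X, x * s ∈ X)

theorem leftInverse_retraction : Function.LeftInverse (retraction hdec hXl hXr) lam :=
  fun r => (component_eq_iff hdec).2 (by simp)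

theorem retraction_eq_zero_of_mem {x : S} (hx : x ∈ X) : retraction hdec hXl hXr x = 0 :=
  (component_eq_iff hdec).2 (by simpa using hx)

end Retraction

section FiberProduct

variable {R S T : Type*} [Ring R] [Ring S] [Ring T] {p : S →+* R} {q : T →+* R}

variable (p q) in
def fiberProduct : Subring (S × T) :=
  (p.comp (RingHom.fst S T)).eqLocus (q.comp (RingHom.snd S T))

theorem mem_fiberProduct {m : S × T} : m ∈ fiberProduct p q ↔ p m.1 = q m.2 := Iff.rfl

def inclLeft (p : S →+* R) {mu : R →+* T} (hq : Function.LeftInverse q mu) :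
    S →+* fiberProduct p q :=
  ((RingHom.id S).prod (mu.comp p)).codRestrict _ fun s => by
    simp [mem_fiberProduct, hq (p s)]

def inclRight (q : T →+* R) {lam : R →+* S} (hp : Function.LeftInverse p lam) :
    T →+* fiberProduct p q :=
  ((lam.comp q).prod (RingHom.id T)).codRestrict _ fun t => by
    simp [mem_fiberProduct, hp (q t)]

variable {lam : R →+* S} {mu : R →+* T} (hp : Function.LeftInverse p lam)
  (hq : Function.LeftInverse q mu)

@[simp]
theorem coe_inclLeft (s : S) : (inclLeft p hq s : S × T) = (s, mu (p s)) := rfl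

@[simp]
theorem coe_inclRight (t : T) : (inclRight q hp t : S × T) = (lam (q t), t) := rfl

theorem inclLeft_injective : Function.Injective (inclLeft p hq) :=
  fun _ _ h => congrArg (fun m : fiberProduct p q => (m : S × T).1) h

theorem inclRight_injective : Function.Injective (inclRight q hp) :=
  fun _ _ h => congrArg (fun m : fiberProduct p q => (m : S × T).2) h

theorem inclLeft_comp : (inclLeft p hq).comp lam = (inclRight q hp).comp mu :=
  RingHom.ext fun r => Subtype.ext <| by simp [hp r, hq r]

theorem inclLeft_mul_inclRight {s : S} {t : T} (hs : p s = 0) (ht : q t = 0) :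
    inclLeft p hq s * inclRight q hp t = 0 :=
  Subtype.ext <| by simp [hs, ht]

theorem inclRight_mul_inclLeft {s : S} {t : T} (hs : p s = 0) (ht : q t = 0) :
    inclRight q hp t * inclLeft p hq s = 0 :=
  Subtype.ext <| by simp [hs, ht]

theorem inclLeft_eq_inclRight_iff {s : S} {t : T} :
    inclLeft p hq s = inclRight q hp t ↔ ∃ r, lam r = s ∧ mu r = t := by
  constructor
  · intro h
    obtain ⟨hs, ht⟩ := Prod.ext_iff.1 (congrArg Subtype.val h)
    simp only [coe_inclLeft, coe_inclRight] at hs ht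
    refine ⟨p s, ?_, ht⟩
    rw [hs, hp]
  · rintro ⟨r, rfl, rfl⟩
    exact RingHom.congr_fun (inclLeft_comp hp hq) r

theorem exists_eq_inclLeft_sub_inclRight (m : fiberProduct p q) :
    ∃ s t, m = inclLeft p hq s - inclRight q hp t := by
  obtain ⟨⟨s, t⟩, hm⟩ := m
  refine ⟨s, mu (p s) - t, Subtype.ext ?_⟩
  have : q (mu (p s) - t) = 0 := by
    rw [map_sub, hq, sub_eq_zero]; exact hm
  show (s, t) = (s, mu (p s)) - (lam (q (mu (p s) - t)), mu (p s) - t)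
  rw [this, map_zero, Prod.mk_sub_mk, sub_zero, sub_sub_cancel]

end FiberProduct

end StrictlyPure

open StrictlyPure

theorem stmt16_general {R S T : Type u} [Ring R] [Ring S] [Ring T]
    (lam : R →+* S) (mu : R →+* T)
    (X : AddSubgroup S) (Y : AddSubgroup T)
    (hXl : ∀ s : S, ∀ x ∈ X, s * x ∈ X) (hXr : ∀ s : S, ∀ x ∈ X, x * s ∈ X)
    (hYl : ∀ t : T, ∀ y ∈ Y, t * y ∈ Y) (hYr : ∀ t : T, ∀ y ∈ Y, y * t ∈ Y)
    (hSdec : ∀ s : S, ∃! p : R × X, s = lam p.1 + (p.2 : S))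
    (hTdec : ∀ t : T, ∃! p : R × Y, t = mu p.1 + (p.2 : T)) :
    ∃ (M : RingCat.{u}) (ιS : S →+* M) (ιT : T →+* M),
      Function.Injective ιS ∧ Function.Injective ιT ∧
      ιS.comp lam = ιT.comp mu ∧
      (∀ x ∈ X, ∀ y ∈ Y, ιS x * ιT y = 0 ∧ ιT y * ιS x = 0) ∧
      Function.Injective (fun r : R => (lam r, mu r)) ∧
      (∀ (s : S) (t : T), ιS s * 1 = 1 * ιT t ↔ ∃ r : R, lam r = s ∧ mu r = t) ∧
      (∀ m : M, ∃ (s : S) (t : T), m = ιS s * 1 - 1 * ιT t) := by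
  have hp := leftInverse_retraction hSdec hXl hXr
  have hq := leftInverse_retraction hTdec hYl hYr
  refine ⟨RingCat.of (fiberProduct _ _), inclLeft _ hq, inclRight _ hp,
    inclLeft_injective hq, inclRight_injective hp, inclLeft_comp hp hq,
    fun x hx y hy => ?_, fun _ _ h => hp.injective (congrArg Prod.fst h),
    fun s t => by simpa using inclLeft_eq_inclRight_iff hp hq,
    fun m => by simpa using exists_eq_inclLeft_sub_inclRight hp hq m⟩
  have hx' := retraction_eq_zero_of_mem hSdec hXl hXr hx
  have hy' := retraction_eq_zero_of_mem hTdec hYl hYr hy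
  exact ⟨inclLeft_mul_inclRight hp hq hx' hy', inclRight_mul_inclLeft hp hq hx' hy'⟩

/-- Let `R ⊆ S` and `R ⊆ T` be strictly pure extensions (realized by
injective ring homomorphisms `λ : R → S`, `μ : R → T`), with decompositions
`S = R ⊕ X` and `T = R ⊕ Y` of `(R,R)`-bimodules, where `X` is an ideal of `S` and
`Y` an ideal of `T`.  Then `M := R ⊕ X ⊕ Y`, equipped with the multiplication
`(r₁+x₁+y₁)(r₂+x₂+y₂) = r₁r₂ + (r₁x₂+x₁r₂+x₁x₂) + (r₁y₂+y₁r₂+y₁y₂)` (so that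
`X·Y = Y·X = 0`), is an associative unital ring containing `S` and `T` as subrings,
and `(incl_S, incl_T, M, 1)` is an exact context. -/
theorem stmt16 {R S T : Type u} [Ring R] [Ring S] [Ring T]
    (lam : R →+* S) (mu : R →+* T)
    (hlam : Function.Injective lam) (hmu : Function.Injective mu)
    (X : AddSubgroup S) (Y : AddSubgroup T)
    (hXl : ∀ s : S, ∀ x ∈ X, s * x ∈ X) (hXr : ∀ s : S, ∀ x ∈ X, x * s ∈ X)
    (hYl : ∀ t : T, ∀ y ∈ Y, t * y ∈ Y) (hYr : ∀ t : T, ∀ y ∈ Y, y * t ∈ Y)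
    (hSdec : ∀ s : S, ∃! p : R × X, s = lam p.1 + (p.2 : S))
    (hTdec : ∀ t : T, ∃! p : R × Y, t = mu p.1 + (p.2 : T)) :
    ∃ (M : RingCat.{u}) (ιS : S →+* M) (ιT : T →+* M),
      Function.Injective ιS ∧ Function.Injective ιT ∧
      ιS.comp lam = ιT.comp mu ∧
      (∀ x ∈ X, ∀ y ∈ Y, ιS x * ιT y = 0 ∧ ιT y * ιS x = 0) ∧
      Function.Injective (fun r : R => (lam r, mu r)) ∧
      (∀ (s : S) (t : T), ιS s * 1 = 1 * ιT t ↔ ∃ r : R, lam r = s ∧ mu r = t) ∧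
      (∀ m : M, ∃ (s : S) (t : T), m = ιS s * 1 - 1 * ιT t) :=
  stmt16_general lam mu X Y hXl hXr hYl hYr hSdec hTdec
end

section
/- Let R ⊆ S be an extension of rings with inclusion λ, π: S → S/R the canonical surjection of R-modules, S' = End_R(S/R), and λ': R → S' defined by λ'(r) = (x ↦ xr). Then the sequence 0 → R → S ⊕ S' → Hom_R(S, S/R) → 0, with maps r ↦ (λ(r), λ'(r)) and (s, f) ↦ (·s)∘π − π∘f, is exact; i.e. (λ, λ', Hom_R(S, S/R), π) is an exact context. -/
/-!
Every `R`-linear `f : S → S/R` is determined on `R` by `f 1`: choosing `s` with `π s = f 1`,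
the map `x ↦ π(x s) - f x` vanishes on `R` and so factors through `π` as an `R`-linear
endomorphism `h` of `S/R`, giving `f = (·s)π - πh`. Conversely, `(·s)π = πh` evaluated at `1`
forces `π s = 0`, i.e. `s ∈ R`, and then `h` is right multiplication by `s`.
-/

namespace Subring

variable {S : Type*} [Ring S] {R : Subring S}

theorem mem_of_forall_mk_mul_eq {s : S} {h : S ⧸ R.toAddSubgroup →+ S ⧸ R.toAddSubgroup}
    (H : ∀ x : S, (QuotientAddGroup.mk (x * s) : S ⧸ R.toAddSubgroup) =
      h (QuotientAddGroup.mk x)) :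
    s ∈ R := by
  have mk_one : (QuotientAddGroup.mk 1 : S ⧸ R.toAddSubgroup) = 0 :=
    (QuotientAddGroup.eq_zero_iff _).mpr R.one_mem
  have := H 1
  rw [one_mul, mk_one, map_zero] at this
  exact (QuotientAddGroup.eq_zero_iff s).mp this

theorem forall_mk_mul_eq_iff (ract : R → S ⧸ R.toAddSubgroup → S ⧸ R.toAddSubgroup)
    (hract : ∀ (r : R) (x : S),
      ract r (QuotientAddGroup.mk x) = QuotientAddGroup.mk (x * (r : S)))
    (s : S) (h : S ⧸ R.toAddSubgroup →+ S ⧸ R.toAddSubgroup) :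
    (∀ x : S, (QuotientAddGroup.mk (x * s) : S ⧸ R.toAddSubgroup) =
        h (QuotientAddGroup.mk x)) ↔
      ∃ r : R, (r : S) = s ∧ ∀ q : S ⧸ R.toAddSubgroup, h q = ract r q := by
  constructor
  · intro H
    refine ⟨⟨s, mem_of_forall_mk_mul_eq H⟩, rfl, fun q => ?_⟩
    obtain ⟨x, rfl⟩ := QuotientAddGroup.mk_surjective q
    rw [hract, ← H]
  · rintro ⟨r, rfl, hr⟩ x
    rw [hr, hract]

section Correction

variable (act : R → S ⧸ R.toAddSubgroup → S ⧸ R.toAddSubgroup) {f : S →+ S ⧸ R.toAddSubgroup}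

theorem map_coe_eq_mk_mul
    (hact : ∀ (r : R) (x : S),
      act r (QuotientAddGroup.mk x) = QuotientAddGroup.mk ((r : S) * x))
    (hf : ∀ (r : R) (x : S), f ((r : S) * x) = act r (f x))
    {s : S} (hs : QuotientAddGroup.mk s = f 1) (r : R) :
    f r = QuotientAddGroup.mk ((r : S) * s) := by
  rw [← mul_one (r : S), hf, ← hs, hact, mul_one]

def quotientCorrection (f : S →+ S ⧸ R.toAddSubgroup) (s : S)
    (hfs : ∀ r : R, f r = QuotientAddGroup.mk ((r : S) * s)) :
    S ⧸ R.toAddSubgroup →+ S ⧸ R.toAddSubgroup :=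
  QuotientAddGroup.lift R.toAddSubgroup
    ((QuotientAddGroup.mk' R.toAddSubgroup).comp (AddMonoidHom.mulRight s) - f)
    fun x hx => by
      change QuotientAddGroup.mk (x * s) - f x = 0
      rw [hfs ⟨x, hx⟩, sub_self]

theorem quotientCorrection_mk (s : S) (hfs : ∀ r : R, f r = QuotientAddGroup.mk ((r : S) * s))
    (x : S) :
    quotientCorrection f s hfs (QuotientAddGroup.mk x) = QuotientAddGroup.mk (x * s) - f x :=
  rfl

theorem quotientCorrection_map_act
    (hact : ∀ (r : R) (x : S),
      act r (QuotientAddGroup.mk x) = QuotientAddGroup.mk ((r : S) * x))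
    (hf : ∀ (r : R) (x : S), f ((r : S) * x) = act r (f x))
    (s : S) (hfs : ∀ r : R, f r = QuotientAddGroup.mk ((r : S) * s))
    (r : R) (q : S ⧸ R.toAddSubgroup) :
    quotientCorrection f s hfs (act r q) = act r (quotientCorrection f s hfs q) := by
  obtain ⟨x, rfl⟩ := QuotientAddGroup.mk_surjective q
  obtain ⟨y, hy⟩ := QuotientAddGroup.mk_surjective (f x)
  rw [hact, quotientCorrection_mk, quotientCorrection_mk, hf, ← hy, hact,
    ← QuotientAddGroup.mk_sub, ← QuotientAddGroup.mk_sub, hact, mul_sub, mul_assoc]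

end Correction

end Subring

open Subring in
/-- Let `R ⊆ S` be an extension of rings, `π : S → S/R` the
canonical surjection of left `R`-modules, `S' = End_R(S/R)` and `λ' : R → S'`
given by right multiplication (`λ'(r) : x ↦ x·r`, encoded by `ract`).  Then the
sequence `0 → R → S ⊕ S' → Hom_R(S, S/R) → 0`, with maps `r ↦ ((r : S), λ'(r))`
and `(s, f) ↦ (·s)∘π − π∘f`, is exact; that is, `(λ, λ', Hom_R(S, S/R), π)` is an
exact context.  Here the left `R`-action on `S/R` is `act r (class x) = class (r·x)`
and the right action of `R` is `ract r (class x) = class (x·r)`;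
`Hom_R(S, S/R)` consists of the additive maps `f : S → S/R` with
`f(r·x) = act r (f x)`, and `S'` of the additive endomorphisms `h` of `S/R`
commuting with `act`. -/
theorem stmt19 {S : Type*} [Ring S] (R : Subring S)
    (act : R → (S ⧸ R.toAddSubgroup) → (S ⧸ R.toAddSubgroup))
    (hact : ∀ (r : R) (x : S),
      act r (QuotientAddGroup.mk x) = QuotientAddGroup.mk ((r : S) * x))
    (ract : R → (S ⧸ R.toAddSubgroup) → (S ⧸ R.toAddSubgroup))
    (hract : ∀ (r : R) (x : S),
      ract r (QuotientAddGroup.mk x) = QuotientAddGroup.mk (x * (r : S))) :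
    -- injectivity of `r ↦ (λ(r), λ'(r))`
    Function.Injective (fun r : R => (((r : S), fun q => ract r q) :
      S × ((S ⧸ R.toAddSubgroup) → (S ⧸ R.toAddSubgroup)))) ∧
    -- exactness in the middle: `(·s)∘π = π∘h` iff `(s, h)` comes from `R`
    (∀ (s : S) (h : (S ⧸ R.toAddSubgroup) →+ (S ⧸ R.toAddSubgroup)),
      (∀ (r : R) (q : S ⧸ R.toAddSubgroup), h (act r q) = act r (h q)) →
      ((∀ x : S, QuotientAddGroup.mk (x * s) = h (QuotientAddGroup.mk x)) ↔
        ∃ r : R, (r : S) = s ∧ ∀ q : S ⧸ R.toAddSubgroup, h q = ract r q)) ∧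
    -- exactness on the right: every `R`-linear `f : S → S/R` is `(·s)∘π − π∘h`
    (∀ f : S →+ S ⧸ R.toAddSubgroup,
      (∀ (r : R) (x : S), f ((r : S) * x) = act r (f x)) →
      ∃ (s : S) (h : (S ⧸ R.toAddSubgroup) →+ (S ⧸ R.toAddSubgroup)),
        (∀ (r : R) (q : S ⧸ R.toAddSubgroup), h (act r q) = act r (h q)) ∧
        ∀ x : S, f x = QuotientAddGroup.mk (x * s) - h (QuotientAddGroup.mk x)) := by
  refine ⟨fun a b hab => Subtype.ext (congrArg Prod.fst hab),
    fun s h _ => forall_mk_mul_eq_iff ract hract s h, fun f hf => ?_⟩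
  obtain ⟨s, hs⟩ := QuotientAddGroup.mk_surjective (f 1)
  have hfs := map_coe_eq_mk_mul act hact hf hs
  refine ⟨s, quotientCorrection f s hfs, quotientCorrection_map_act act hact hf s hfs,
    fun x => ?_⟩
  rw [quotientCorrection_mk]
  abel
end
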